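/- No uniform convergence rate holds for general integrable data: let N ≥ 1 and let φ : (0,∞) → (0,∞) be any nonincreasing function with φ(t) → 0 as t → ∞. Then there exist u₀ ∈ L¹(ℝ^N) with u₀ ≥ 0 and ∫_{ℝ^N} u₀(x) dx = 1, and a sequence t_n → ∞, such that for every n ≥ 1 the solution u(x,t) = ∫_{ℝ^N} G_t(x−y) u₀(y) dy satisfies t_n^{N/2} ‖u(·,t_n) − G_{t_n}‖_{L^∞(ℝ^N)} ≥ n·φ(t_n). -/

import Mathlib

open MeasureTheory Real Filter

/-- The Gaussian heat kernel on `ℝ^N`: `G_t(x) = (4πt)^{-N/2} exp(-|x|²/(4t))`. -/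
noncomputable def heatKernel (N : ℕ) (t : ℝ) (x : EuclideanSpace ℝ (Fin N)) : ℝ :=
  (4 * π * t) ^ (-(N : ℝ) / 2) * exp (-‖x‖ ^ 2 / (4 * t))

/-- The solution of the heat equation with initial data `u₀`, given by convolution
with the heat kernel: `u(x,t) = ∫ G_t(x-y) u₀(y) dy`. -/
noncomputable def heatSol (N : ℕ) (u₀ : EuclideanSpace ℝ (Fin N) → ℝ)
    (x : EuclideanSpace ℝ (Fin N)) (t : ℝ) : ℝ :=
  ∫ y, heatKernel N t (x - y) * u₀ y

/-!
Choose times `tₙ → ∞` with `n φ(tₙ) ≤ c aₙ`, where `aₙ = 2^{-(n+1)}` and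
`c = (4π)^{-N/2} e^{-1}/2`, and let `u₀` be the sum of the normalized indicators of unit balls
`B(xₙ, 1)` weighted by `aₙ`. For `t ≥ 1/4` the kernel is at least `e^{-1} Gₜ(0)` on a unit ball,
so `u(xₙ, tₙ) ≥ e^{-1} G_{tₙ}(0) aₙ`, while `xₙ` is placed so far out that `G_{tₙ}(xₙ)` is at most
half of this. As `t^{N/2} Gₜ(0)` is the constant `(4π)^{-N/2}`, the renormalized error at `xₙ` is
at least `c aₙ ≥ n φ(tₙ)`.
-/

open Metric

section HeatKernel

variable {N : ℕ} {t : ℝ}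

lemma heatKernel_zero (N : ℕ) (t : ℝ) : heatKernel N t 0 = (4 * π * t) ^ (-(N : ℝ) / 2) := by
  simp [heatKernel]

lemma heatKernel_pos (ht : 0 < t) (x : EuclideanSpace ℝ (Fin N)) : 0 < heatKernel N t x := by
  unfold heatKernel
  have := pi_pos
  positivity

lemma heatKernel_le_heatKernel_zero (ht : 0 < t) (x : EuclideanSpace ℝ (Fin N)) :
    heatKernel N t x ≤ heatKernel N t 0 := by
  rw [heatKernel_zero, heatKernel]
  have := pi_pos
  refine mul_le_of_le_one_right (by positivity) (exp_le_one_iff.2 ?_)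
  exact div_nonpos_of_nonpos_of_nonneg (neg_nonpos.2 (sq_nonneg _)) (by positivity)

lemma heatKernel_zero_mul_exp_neg_one_le (ht : 0 < t) {x : EuclideanSpace ℝ (Fin N)}
    (hx : ‖x‖ ^ 2 ≤ 4 * t) : heatKernel N t 0 * exp (-1) ≤ heatKernel N t x := by
  rw [heatKernel_zero, heatKernel]
  have := pi_pos
  gcongr
  rw [neg_div, neg_le_neg_iff, div_le_one (by positivity)]
  exact hx

lemma rpow_mul_heatKernel_zero (ht : 0 < t) :
    t ^ ((N : ℝ) / 2) * heatKernel N t 0 = (4 * π) ^ (-(N : ℝ) / 2) := by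
  rw [heatKernel_zero, mul_rpow (by positivity) ht.le, mul_left_comm, ← rpow_add ht, neg_div,
    add_neg_cancel, rpow_zero, mul_one]

lemma continuous_heatKernel (N : ℕ) (t : ℝ) : Continuous (heatKernel N t) := by
  unfold heatKernel
  fun_prop

lemma tendsto_heatKernel_cobounded (ht : 0 < t) :
    Tendsto (heatKernel N t) (Bornology.cobounded _) (nhds 0) := by
  have hsq : Tendsto (fun x : EuclideanSpace ℝ (Fin N) => ‖x‖ ^ 2) (Bornology.cobounded _) atTop :=
    (tendsto_pow_atTop two_ne_zero).comp tendsto_norm_cobounded_atTop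
  have hexp := tendsto_exp_atBot.comp
    ((tendsto_neg_atTop_atBot.comp hsq).atBot_div_const (by positivity : 0 < 4 * t))
  unfold heatKernel
  simpa using hexp.const_mul ((4 * π * t) ^ (-(N : ℝ) / 2))

lemma exists_heatKernel_lt (hN : 1 ≤ N) (ht : 0 < t) {ε : ℝ} (hε : 0 < ε) :
    ∃ x, heatKernel N t x < ε := by
  have : Nonempty (Fin N) := ⟨⟨0, hN⟩⟩
  exact ((tendsto_heatKernel_cobounded ht).eventually (gt_mem_nhds hε)).exists

end HeatKernel

section HeatSol

variable {N : ℕ} {t : ℝ} {u₀ : EuclideanSpace ℝ (Fin N) → ℝ}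

lemma integrable_heatKernel_sub_mul (ht : 0 < t) (hu : Integrable u₀)
    (x : EuclideanSpace ℝ (Fin N)) : Integrable (fun y => heatKernel N t (x - y) * u₀ y) := by
  refine hu.bdd_mul (c := heatKernel N t 0) ?_ (Eventually.of_forall fun y => ?_)
  · exact ((continuous_heatKernel N t).comp (continuous_sub_left x)).aestronglyMeasurable
  · rw [norm_of_nonneg (heatKernel_pos ht _).le]
    exact heatKernel_le_heatKernel_zero ht _

lemma abs_heatSol_le (ht : 0 < t) (hu : Integrable u₀) (x : EuclideanSpace ℝ (Fin N)) :
    |heatSol N u₀ x t| ≤ heatKernel N t 0 * ∫ y, |u₀ y| := by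
  rw [← norm_eq_abs, ← integral_const_mul, heatSol]
  refine norm_integral_le_of_norm_le (hu.abs.const_mul _) (Eventually.of_forall fun y => ?_)
  rw [norm_mul, norm_of_nonneg (heatKernel_pos ht _).le, norm_eq_abs]
  exact mul_le_mul_of_nonneg_right (heatKernel_le_heatKernel_zero ht _) (abs_nonneg _)

lemma bddAbove_range_abs_heatSol_sub_heatKernel (ht : 0 < t) (hu : Integrable u₀) :
    BddAbove (Set.range fun x => |heatSol N u₀ x t - heatKernel N t x|) := by
  refine ⟨(heatKernel N t 0 * ∫ y, |u₀ y|) + heatKernel N t 0, ?_⟩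
  rintro _ ⟨x, rfl⟩
  calc |heatSol N u₀ x t - heatKernel N t x|
      ≤ |heatSol N u₀ x t| + |heatKernel N t x| := abs_sub _ _
    _ ≤ _ := by
      rw [abs_of_pos (heatKernel_pos ht x)]
      exact add_le_add (abs_heatSol_le ht hu x) (heatKernel_le_heatKernel_zero ht x)

lemma heatKernel_zero_mul_exp_neg_one_mul_setIntegral_le_heatSol (ht : 1 ≤ 4 * t)
    (hu : Integrable u₀) (hu₀ : ∀ y, 0 ≤ u₀ y) (x : EuclideanSpace ℝ (Fin N)) :
    heatKernel N t 0 * exp (-1) * ∫ y in ball x 1, u₀ y ≤ heatSol N u₀ x t := by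
  have ht₀ : 0 < t := by linarith
  have hint := integrable_heatKernel_sub_mul ht₀ hu x
  rw [← integral_const_mul]
  calc ∫ y in ball x 1, heatKernel N t 0 * exp (-1) * u₀ y
      ≤ ∫ y in ball x 1, heatKernel N t (x - y) * u₀ y := by
        refine setIntegral_mono_on (hu.const_mul _).integrableOn hint.integrableOn
          measurableSet_ball fun y hy => mul_le_mul_of_nonneg_right ?_ (hu₀ y)
        refine heatKernel_zero_mul_exp_neg_one_le ht₀ ?_
        have : ‖x - y‖ < 1 := by rw [← dist_eq_norm, dist_comm]; exact hy
        nlinarith [norm_nonneg (x - y)]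
    _ ≤ heatSol N u₀ x t :=
        setIntegral_le_integral hint
          (Eventually.of_forall fun y => mul_nonneg (heatKernel_pos ht₀ _).le (hu₀ y))

lemma le_rpow_mul_iSup_abs_heatSol_sub_heatKernel (ht : 1 ≤ 4 * t) (hu : Integrable u₀)
    (hu₀ : ∀ y, 0 ≤ u₀ y) {x : EuclideanSpace ℝ (Fin N)} {m : ℝ}
    (hm : m ≤ ∫ y in ball x 1, u₀ y) (hx : heatKernel N t x ≤ heatKernel N t 0 * exp (-1) * m / 2) :
    (4 * π) ^ (-(N : ℝ) / 2) * exp (-1) * m / 2 ≤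
      t ^ ((N : ℝ) / 2) * ⨆ z, |heatSol N u₀ z t - heatKernel N t z| := by
  have ht₀ : 0 < t := by linarith
  have hsol := heatKernel_zero_mul_exp_neg_one_mul_setIntegral_le_heatSol ht hu hu₀ x
  have hpeak : 0 ≤ heatKernel N t 0 * exp (-1) := by
    have := heatKernel_pos (N := N) ht₀ 0
    positivity
  have hgap : heatKernel N t 0 * exp (-1) * m / 2 ≤ |heatSol N u₀ x t - heatKernel N t x| := by
    linarith [le_abs_self (heatSol N u₀ x t - heatKernel N t x),
      mul_le_mul_of_nonneg_left hm hpeak]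
  calc (4 * π) ^ (-(N : ℝ) / 2) * exp (-1) * m / 2
      = t ^ ((N : ℝ) / 2) * (heatKernel N t 0 * exp (-1) * m / 2) := by
        rw [← rpow_mul_heatKernel_zero ht₀]; ring
    _ ≤ t ^ ((N : ℝ) / 2) * ⨆ z, |heatSol N u₀ z t - heatKernel N t z| := by
        gcongr
        exact hgap.trans (le_ciSup (bddAbove_range_abs_heatSol_sub_heatKernel ht₀ hu) x)

end HeatSol

lemma integrable_tsum_of_nonneg {α : Type*} [MeasurableSpace α] {μ : Measure α}
    {F : ℕ → α → ℝ} (hF : ∀ n, Integrable (F n) μ) (hF₀ : ∀ n a, 0 ≤ F n a)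
    (hsum : ∀ a, Summable (F · a)) (hint : Summable fun n => ∫ a, F n a ∂μ) :
    Integrable (fun a => ∑' n, F n a) μ := by
  refine ⟨aestronglyMeasurable_of_tendsto_ae atTop
    (fun k => Finset.aestronglyMeasurable_fun_sum (Finset.range k) fun n _ => (hF n).1)
    (Eventually.of_forall fun a => (hsum a).hasSum.tendsto_sum_nat), ?_⟩
  rw [hasFiniteIntegral_iff_ofReal (Eventually.of_forall fun a => tsum_nonneg (hF₀ · a))]
  calc ∫⁻ a, ENNReal.ofReal (∑' n, F n a) ∂μ
      = ∫⁻ a, ∑' n, ENNReal.ofReal (F n a) ∂μ := by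
        simp_rw [ENNReal.ofReal_tsum_of_nonneg (hF₀ · _) (hsum _)]
    _ = ∑' n, ∫⁻ a, ENNReal.ofReal (F n a) ∂μ :=
        lintegral_tsum fun n => (hF n).1.aemeasurable.ennreal_ofReal
    _ = ∑' n, ENNReal.ofReal (∫ a, F n a ∂μ) := by
        simp_rw [ofReal_integral_eq_lintegral_ofReal (hF _) (Eventually.of_forall (hF₀ _))]
    _ < ⊤ := by
        rw [← ENNReal.ofReal_tsum_of_nonneg (fun n => integral_nonneg (hF₀ n)) hint]
        exact ENNReal.ofReal_lt_top

section BumpSeries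

variable {E : Type*} [NormedAddCommGroup E] [MeasurableSpace E] (μ : Measure E)

noncomputable def ballDensity (c : E) : E → ℝ :=
  (ball c 1).indicator fun _ => (μ.real (ball 0 1))⁻¹

noncomputable def bumpSeries (x : ℕ → E) (a : ℕ → ℝ) (y : E) : ℝ :=
  ∑' n, a n * ballDensity μ (x n) y

variable {μ}

lemma ballDensity_nonneg (c y : E) : 0 ≤ ballDensity μ c y :=
  Set.indicator_nonneg (fun _ _ => inv_nonneg.2 measureReal_nonneg) y

lemma ballDensity_le (c y : E) : ballDensity μ c y ≤ (μ.real (ball 0 1))⁻¹ :=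
  Set.indicator_le_self' (fun _ _ => inv_nonneg.2 measureReal_nonneg) y

variable {x : ℕ → E} {a : ℕ → ℝ}

lemma summable_bumpSeries (ha : ∀ n, 0 ≤ a n) (hs : Summable a) (y : E) :
    Summable fun n => a n * ballDensity μ (x n) y :=
  (hs.mul_right (μ.real (ball 0 1))⁻¹).of_nonneg_of_le
    (fun n => mul_nonneg (ha n) (ballDensity_nonneg _ y))
    (fun n => mul_le_mul_of_nonneg_left (ballDensity_le _ y) (ha n))

lemma bumpSeries_nonneg (ha : ∀ n, 0 ≤ a n) (y : E) : 0 ≤ bumpSeries μ x a y :=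
  tsum_nonneg fun n => mul_nonneg (ha n) (ballDensity_nonneg _ y)

variable [ProperSpace E] [BorelSpace E] [μ.IsAddHaarMeasure]

lemma integrable_ballDensity (c : E) : Integrable (ballDensity μ c) μ :=
  (integrable_indicator_iff measurableSet_ball).2 (integrableOn_const measure_ball_lt_top.ne)

lemma integral_ballDensity (c : E) : ∫ y, ballDensity μ c y ∂μ = 1 := by
  have hpos : 0 < μ.real (ball (0 : E) 1) :=
    ENNReal.toReal_pos (measure_ball_pos μ (0 : E) one_pos).ne' measure_ball_lt_top.ne
  rw [ballDensity, integral_indicator_const _ measurableSet_ball, Measure.addHaar_real_ball_center,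
    smul_eq_mul, mul_inv_cancel₀ hpos.ne']

lemma integrable_bumpSeries (ha : ∀ n, 0 ≤ a n) (hs : Summable a) :
    Integrable (bumpSeries μ x a) μ :=
  integrable_tsum_of_nonneg (fun n => (integrable_ballDensity (μ := μ) _).const_mul _)
    (fun n y => mul_nonneg (ha n) (ballDensity_nonneg _ y)) (summable_bumpSeries ha hs)
    (by simpa only [integral_const_mul, integral_ballDensity, mul_one] using hs)

lemma integral_bumpSeries (ha : ∀ n, 0 ≤ a n) (hs : Summable a) :
    ∫ y, bumpSeries μ x a y ∂μ = ∑' n, a n := by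
  have hint n : Integrable (fun y => a n * ballDensity μ (x n) y) μ :=
    (integrable_ballDensity (μ := μ) _).const_mul _
  have hnorm n : ∫ y, ‖a n * ballDensity μ (x n) y‖ ∂μ = a n := by
    simp_rw [norm_of_nonneg (mul_nonneg (ha n) (ballDensity_nonneg _ _)), integral_const_mul,
      integral_ballDensity, mul_one]
  unfold bumpSeries
  rw [← integral_tsum_of_summable_integral_norm hint (by simpa only [hnorm] using hs)]
  simp only [integral_const_mul, integral_ballDensity, mul_one]

lemma le_setIntegral_bumpSeries (ha : ∀ n, 0 ≤ a n) (hs : Summable a) (n : ℕ) :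
    a n ≤ ∫ y in ball (x n) 1, bumpSeries μ x a y ∂μ := by
  calc a n = ∫ y in ball (x n) 1, a n * ballDensity μ (x n) y ∂μ := by
        rw [integral_const_mul, setIntegral_eq_integral_of_forall_compl_eq_zero
          (f := ballDensity μ (x n)) fun y hy => Set.indicator_of_notMem hy _,
          integral_ballDensity, mul_one]
    _ ≤ _ := setIntegral_mono_on ((integrable_ballDensity (μ := μ) _).const_mul _).integrableOn
        (integrable_bumpSeries ha hs).integrableOn measurableSet_ball fun y _ =>
          (summable_bumpSeries ha hs y).le_tsum n fun m _ =>
            mul_nonneg (ha m) (ballDensity_nonneg _ y)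

end BumpSeries

lemma exists_seq_natCast_mul_le_of_tendsto_zero {φ : ℝ → ℝ} (hφ : Tendsto φ atTop (nhds 0))
    {ε : ℕ → ℝ} (hε : ∀ n, 0 < ε n) :
    ∃ t : ℕ → ℝ, ∀ n : ℕ, (n : ℝ) + 1 ≤ t n ∧ n * φ (t n) ≤ ε n := by
  have h (n : ℕ) : ∀ᶠ s in atTop, (n : ℝ) + 1 ≤ s ∧ n * φ s ≤ ε n := by
    have hnφ : Tendsto (fun s => n * φ s) atTop (nhds 0) := by
      simpa using hφ.const_mul (n : ℝ)
    exact (eventually_ge_atTop _).and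
      ((hnφ.eventually (gt_mem_nhds (hε n))).mono fun _ => le_of_lt)
  exact Classical.axiomOfChoice fun n => (h n).exists

theorem heat_no_uniform_rate_general (N : ℕ) (hN : 1 ≤ N)
    (φ : ℝ → ℝ)
    (hφ0 : Tendsto φ atTop (nhds 0)) :
    ∃ u₀ : EuclideanSpace ℝ (Fin N) → ℝ,
      Integrable u₀ ∧ (∀ x, 0 ≤ u₀ x) ∧ (∫ x, u₀ x) = 1 ∧
      ∃ tseq : ℕ → ℝ, Tendsto tseq atTop atTop ∧
        ∀ n : ℕ, 1 ≤ n →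
          (n : ℝ) * φ (tseq n) ≤ (tseq n) ^ ((N : ℝ) / 2) *
            ⨆ x : EuclideanSpace ℝ (Fin N),
              |heatSol N u₀ x (tseq n) - heatKernel N (tseq n) x| := by
  set a : ℕ → ℝ := fun n => 1 / 2 / 2 ^ n
  have ha : HasSum a 1 := hasSum_geometric_two' 1
  have ha₀ n : 0 ≤ a n := by positivity
  obtain ⟨t, ht⟩ := exists_seq_natCast_mul_le_of_tendsto_zero hφ0
    (ε := fun n => (4 * π) ^ (-(N : ℝ) / 2) * exp (-1) * a n / 2) fun n => by positivity
  have ht₁ n : 1 ≤ t n := by linarith [(ht n).1, n.cast_nonneg (α := ℝ)]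
  have hpeak n : 0 < heatKernel N (t n) 0 := heatKernel_pos (by linarith [ht₁ n]) 0
  choose x hx using fun n => exists_heatKernel_lt hN (by linarith [ht₁ n])
    (ε := heatKernel N (t n) 0 * exp (-1) * a n / 2) (by have := hpeak n; positivity)
  have hu : Integrable (bumpSeries volume x a) := integrable_bumpSeries ha₀ ha.summable
  refine ⟨bumpSeries volume x a, hu, bumpSeries_nonneg ha₀,
    (integral_bumpSeries ha₀ ha.summable).trans ha.tsum_eq, t, ?_, fun n _ => ?_⟩
  · exact tendsto_atTop_mono (fun n => (ht n).1)
      (tendsto_atTop_add_const_right _ 1 tendsto_natCast_atTop_atTop)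
  · exact (ht n).2.trans <| le_rpow_mul_iSup_abs_heatSol_sub_heatKernel (by linarith [ht₁ n]) hu
      (bumpSeries_nonneg ha₀) (le_setIntegral_bumpSeries ha₀ ha.summable n) (hx n).le

/-- No uniform convergence rate for general integrable data: for any nonincreasing
rate function `φ` tending to `0`, there exist nonnegative unit-mass data and times
`t_n → ∞` along which the renormalized error exceeds `n·φ(t_n)`. -/
theorem heat_no_uniform_rate (N : ℕ) (hN : 1 ≤ N)
    (φ : ℝ → ℝ) (hφpos : ∀ t : ℝ, 0 < t → 0 < φ t)
    (hφmono : ∀ s t : ℝ, 0 < s → s ≤ t → φ t ≤ φ s)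
    (hφ0 : Tendsto φ atTop (nhds 0)) :
    ∃ u₀ : EuclideanSpace ℝ (Fin N) → ℝ,
      Integrable u₀ ∧ (∀ x, 0 ≤ u₀ x) ∧ (∫ x, u₀ x) = 1 ∧
      ∃ tseq : ℕ → ℝ, Tendsto tseq atTop atTop ∧
        ∀ n : ℕ, 1 ≤ n →
          (n : ℝ) * φ (tseq n) ≤ (tseq n) ^ ((N : ℝ) / 2) *
            ⨆ x : EuclideanSpace ℝ (Fin N),
              |heatSol N u₀ x (tseq n) - heatKernel N (tseq n) x| :=
  heat_no_uniform_rate_general N hN φ hφ0
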